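/- Let (φ, ℓ) be a gauge datum with r = φ∘ℓ, let a₀ : E → 𝔤 be linear, let f : ℝ → ℝ be smooth with f(0) = 0 and f(1) = 1, and for t ∈ [0,1] set a_t := a₀ + f(t)·( (φ∘a₀ − r) − a₀ ). Then for all x, y ∈ E: (1/2) ∫₀¹ (a_t ∧_B ȧ_t)(x, y) dt = (1/2)( a₀ ∧_B (φ∘a₀) )(x, y) + (1/2)( r ∧_B a₀ )(x, y); consequently (1/2)(ℓ ∧_B a₀) + (1/2)∫₀¹ a_t ∧_B ȧ_t dt = (1/2)((ℓ + r) ∧_B a₀) + (1/2) a₀ ∧_B (φ∘a₀). (This is the fiberwise form of the paper's Lemma Q^α = ((θ^L + θ^R)/2)·α₀ + (1/2) α₀ · Ad_g α₀ for the interpolated family of connection 1-forms α_t = α₀ + f(t)(g•α₀ − α₀).) -/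

import Mathlib

/-!
Along `a_t = a₀ + f(t)·c` the derivative is `f'(t)·c`, and since `B` is symmetric `c ∧_B c = 0`,
so `a_t ∧_B ȧ_t = f'(t)·(a₀ ∧_B c)`. Integrating gives `(f 1 - f 0)·(a₀ ∧_B c) = a₀ ∧_B c`, and
expanding `c = φ∘a₀ - r - a₀` (`r = φ∘ℓ`) with `a₀ ∧_B a₀ = 0` and `a₀ ∧_B r = -(r ∧_B a₀)`
gives the formula.
-/

/-- `(a ∧_B b)(x, y) = B(a x, b y) - B(a y, b x)` for maps `a, b : E → 𝔤`. -/
def wedgeB {𝔤 E : Type*} [NormedAddCommGroup 𝔤] [NormedSpace ℝ 𝔤]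
    [AddCommGroup E] [Module ℝ E]
    (B : 𝔤 →ₗ[ℝ] 𝔤 →ₗ[ℝ] ℝ) (a b : E → 𝔤) (x y : E) : ℝ :=
  B (a x) (b y) - B (a y) (b x)

section Wedge

variable {𝔤 E : Type*} [NormedAddCommGroup 𝔤] [NormedSpace ℝ 𝔤] [AddCommGroup E] [Module ℝ E]
  {B : 𝔤 →ₗ[ℝ] 𝔤 →ₗ[ℝ] ℝ}

theorem wedgeB_add_left (a a' b : E → 𝔤) (x y : E) :
    wedgeB B (fun e => a e + a' e) b x y = wedgeB B a b x y + wedgeB B a' b x y := by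
  simp only [wedgeB, map_add, LinearMap.add_apply]
  ring

theorem wedgeB_sub_right (a b b' : E → 𝔤) (x y : E) :
    wedgeB B a (fun e => b e - b' e) x y = wedgeB B a b x y - wedgeB B a b' x y := by
  simp only [wedgeB, map_sub]
  ring

theorem wedgeB_smul_left (s : ℝ) (a b : E → 𝔤) (x y : E) :
    wedgeB B (fun e => s • a e) b x y = s * wedgeB B a b x y := by
  simp only [wedgeB, map_smul, LinearMap.smul_apply, smul_eq_mul]
  ring

theorem wedgeB_smul_right (s : ℝ) (a b : E → 𝔤) (x y : E) :
    wedgeB B a (fun e => s • b e) x y = s * wedgeB B a b x y := by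
  simp only [wedgeB, map_smul, smul_eq_mul]
  ring

theorem wedgeB_comm (hB : ∀ u v : 𝔤, B u v = B v u) (a b : E → 𝔤) (x y : E) :
    wedgeB B a b x y = -wedgeB B b a x y := by
  simp only [wedgeB, hB (a x), hB (a y)]
  ring

theorem wedgeB_self (hB : ∀ u v : 𝔤, B u v = B v u) (a : E → 𝔤) (x y : E) :
    wedgeB B a a x y = 0 := by
  simp only [wedgeB, hB (a x)]
  ring

theorem wedgeB_add_smul_smul (hB : ∀ u v : 𝔤, B u v = B v u) (a c : E → 𝔤) (s s' : ℝ)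
    (x y : E) :
    wedgeB B (fun e => a e + s • c e) (fun e => s' • c e) x y = s' * wedgeB B a c x y := by
  rw [wedgeB_add_left, wedgeB_smul_right, wedgeB_smul_right, wedgeB_smul_left,
    wedgeB_self hB]
  ring

theorem integral_wedgeB_deriv_interpolation (hB : ∀ u v : 𝔤, B u v = B v u) {f : ℝ → ℝ}
    (hf : ContDiff ℝ 1 f) (a c : E → 𝔤) (x y : E) :
    ∫ t in (0:ℝ)..1, wedgeB B (fun e => a e + f t • c e)
        (fun e => deriv (fun s => a e + f s • c e) t) x y
      = (f 1 - f 0) * wedgeB B a c x y := by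
  have hfd : Differentiable ℝ f := hf.differentiable one_ne_zero
  have hderiv : ∀ t e, deriv (fun s => a e + f s • c e) t = deriv f t • c e := fun t e => by
    rw [deriv_const_add, deriv_smul_const (hfd t)]
  simp only [hderiv, wedgeB_add_smul_smul hB, intervalIntegral.integral_mul_const]
  rw [intervalIntegral.integral_deriv_eq_sub (fun t _ => hfd t)
    ((hf.continuous_deriv le_rfl).intervalIntegrable 0 1)]

end Wedge

theorem Q_interpolated_family_general
    {𝔤 E : Type*} [NormedAddCommGroup 𝔤] [NormedSpace ℝ 𝔤]
    [AddCommGroup E] [Module ℝ E]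
    (B : 𝔤 →ₗ[ℝ] 𝔤 →ₗ[ℝ] ℝ)
    (B_symm : ∀ x y : 𝔤, B x y = B y x)
    (φ : 𝔤 ≃ₗ[ℝ] 𝔤)
    (ℓ : E →ₗ[ℝ] 𝔤) (a₀ : E →ₗ[ℝ] 𝔤)
    (f : ℝ → ℝ) (hf : ContDiff ℝ (⊤ : ℕ∞) f) (hf0 : f 0 = 0) (hf1 : f 1 = 1)
    (a : ℝ → E → 𝔤)
    (ha : ∀ (t : ℝ) (x : E), a t x = a₀ x + f t • ((φ (a₀ x) - φ (ℓ x)) - a₀ x))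
    (x y : E) :
    (1/2 : ℝ) * (∫ t in (0:ℝ)..1,
        wedgeB B (a t) (fun e => deriv (fun s => a s e) t) x y)
      = (1/2 : ℝ) * wedgeB B (⇑a₀) (fun e => φ (a₀ e)) x y
        + (1/2 : ℝ) * wedgeB B (fun e => φ (ℓ e)) (⇑a₀) x y ∧
    (1/2 : ℝ) * wedgeB B (⇑ℓ) (a 0) x y
      + (1/2 : ℝ) * (∫ t in (0:ℝ)..1,
          wedgeB B (a t) (fun e => deriv (fun s => a s e) t) x y)
      = (1/2 : ℝ) * wedgeB B (fun e => ℓ e + φ (ℓ e)) (⇑a₀) x y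
        + (1/2 : ℝ) * wedgeB B (⇑a₀) (fun e => φ (a₀ e)) x y := by
  obtain rfl : a = fun t e => a₀ e + f t • ((φ (a₀ e) - φ (ℓ e)) - a₀ e) :=
    funext fun t => funext (ha t)
  have hint := integral_wedgeB_deriv_interpolation B_symm (hf.of_le (by simp)) a₀
    (fun e => (φ (a₀ e) - φ (ℓ e)) - a₀ e) x y
  rw [wedgeB_sub_right, wedgeB_sub_right, wedgeB_self B_symm,
    wedgeB_comm B_symm a₀ (fun e => φ (ℓ e)), hf0, hf1] at hint
  have ha0 : (fun e => a₀ e + f 0 • ((φ (a₀ e) - φ (ℓ e)) - a₀ e)) = ⇑a₀ := by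
    simp [hf0]
  refine ⟨?_, ?_⟩
  · rw [hint]; ring
  · beta_reduce
    rw [hint, ha0, wedgeB_add_left]; ring

/-- for the interpolated family `a_t = a₀ + f(t)·((φ∘a₀ - r) - a₀)`
with `r = φ∘ℓ`, `f` smooth, `f 0 = 0`, `f 1 = 1`:
`(1/2)∫₀¹ a_t ∧_B ȧ_t dt = (1/2)(a₀ ∧_B (φ∘a₀)) + (1/2)(r ∧_B a₀)`, and consequently
`(1/2)(ℓ ∧_B a₀) + (1/2)∫₀¹ a_t ∧_B ȧ_t dt = (1/2)((ℓ+r) ∧_B a₀) + (1/2)(a₀ ∧_B (φ∘a₀))`. -/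
theorem Q_interpolated_family
    {𝔤 E : Type*} [NormedAddCommGroup 𝔤] [NormedSpace ℝ 𝔤] [FiniteDimensional ℝ 𝔤]
    [AddCommGroup E] [Module ℝ E]
    (br : 𝔤 →ₗ[ℝ] 𝔤 →ₗ[ℝ] 𝔤)
    (br_alt : ∀ x : 𝔤, br x x = 0)
    (br_jacobi : ∀ x y z : 𝔤, br (br x y) z + br (br y z) x + br (br z x) y = 0)
    (B : 𝔤 →ₗ[ℝ] 𝔤 →ₗ[ℝ] ℝ)
    (B_symm : ∀ x y : 𝔤, B x y = B y x)
    (B_inv : ∀ x y z : 𝔤, B (br x y) z = B x (br y z))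
    (φ : 𝔤 ≃ₗ[ℝ] 𝔤)
    (hφbr : ∀ x y : 𝔤, φ (br x y) = br (φ x) (φ y))
    (hφB : ∀ x y : 𝔤, B (φ x) (φ y) = B x y)
    (ℓ : E →ₗ[ℝ] 𝔤) (a₀ : E →ₗ[ℝ] 𝔤)
    (f : ℝ → ℝ) (hf : ContDiff ℝ (⊤ : ℕ∞) f) (hf0 : f 0 = 0) (hf1 : f 1 = 1)
    (a : ℝ → E → 𝔤)
    (ha : ∀ (t : ℝ) (x : E), a t x = a₀ x + f t • ((φ (a₀ x) - φ (ℓ x)) - a₀ x))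
    (x y : E) :
    (1/2 : ℝ) * (∫ t in (0:ℝ)..1,
        wedgeB B (a t) (fun e => deriv (fun s => a s e) t) x y)
      = (1/2 : ℝ) * wedgeB B (⇑a₀) (fun e => φ (a₀ e)) x y
        + (1/2 : ℝ) * wedgeB B (fun e => φ (ℓ e)) (⇑a₀) x y ∧
    (1/2 : ℝ) * wedgeB B (⇑ℓ) (a 0) x y
      + (1/2 : ℝ) * (∫ t in (0:ℝ)..1,
          wedgeB B (a t) (fun e => deriv (fun s => a s e) t) x y)
      = (1/2 : ℝ) * wedgeB B (fun e => ℓ e + φ (ℓ e)) (⇑a₀) x y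
        + (1/2 : ℝ) * wedgeB B (⇑a₀) (fun e => φ (a₀ e)) x y :=
  Q_interpolated_family_general B B_symm φ ℓ a₀ f hf hf0 hf1 a ha x y
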